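/- arXiv:2208.02813 — 4 statements merged into one kernel-verified Lean document; each statement's English description precedes it below -/
import Mathlib

section
/- Let h, ĥ ∈ ℝ^M and let r_1,…,r_M be independent random variables each with probability density function bounded by κ. Define p_m = P(argmax_{m'} (h_{m'} + r_{m'}) = m) and p̂_m = P(argmax_{m'} (ĥ_{m'} + r_{m'}) = m). Then ‖p − p̂‖_∞ ≤ κ M² ‖h − ĥ‖_∞. -/
open MeasureTheory ProbabilityTheory

lemma key_density_bound {Ω : Type*} [MeasurableSpace Ω] (μ : Measure Ω)
    [IsProbabilityMeasure μ] {X Y : Ω → ℝ} (hX : Measurable X) (hY : Measurable Y)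
    (hXY : IndepFun X Y μ) {κ : ℝ} (hκ : 0 ≤ κ) {f : ℝ → ℝ}
    (hf : Measure.map Y μ = MeasureTheory.volume.withDensity (fun x => ENNReal.ofReal (f x)))
    (hb : ∀ x, f x ≤ κ) (a b : ℝ) :
    μ {ω | Y ω - X ω ∈ Set.Icc a b} ≤ ENNReal.ofReal (κ * (b - a)) := by
  have hs : MeasurableSet {q : ℝ × ℝ | q.2 - q.1 ∈ Set.Icc a b} :=
    (measurable_snd.sub measurable_fst) measurableSet_Icc
  have hmapX : IsProbabilityMeasure (μ.map X) := Measure.isProbabilityMeasure_map hX.aemeasurable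
  have hset : {ω | Y ω - X ω ∈ Set.Icc a b}
      = (fun ω => (X ω, Y ω)) ⁻¹' {q : ℝ × ℝ | q.2 - q.1 ∈ Set.Icc a b} := rfl
  have hprod := (indepFun_iff_map_prod_eq_prod_map_map hX.aemeasurable hY.aemeasurable).mp hXY
  rw [hset, ← Measure.map_apply (hX.prodMk hY) hs, hprod, Measure.prod_apply hs]
  have hinner : ∀ x : ℝ, (μ.map Y) (Prod.mk x ⁻¹' {q : ℝ × ℝ | q.2 - q.1 ∈ Set.Icc a b})
      ≤ ENNReal.ofReal (κ * (b - a)) := by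
    intro x
    have hpre : Prod.mk x ⁻¹' {q : ℝ × ℝ | q.2 - q.1 ∈ Set.Icc a b}
        = Set.Icc (a + x) (b + x) := by
      ext y
      simp only [Set.mem_preimage, Set.mem_setOf_eq, Set.mem_Icc]
      constructor <;> rintro ⟨h1, h2⟩ <;> constructor <;> linarith
    rw [hpre, hf, withDensity_apply _ measurableSet_Icc]
    calc ∫⁻ y in Set.Icc (a + x) (b + x), ENNReal.ofReal (f y)
        ≤ ∫⁻ _ in Set.Icc (a + x) (b + x), ENNReal.ofReal κ :=
          lintegral_mono fun y => ENNReal.ofReal_le_ofReal (hb y)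
      _ = ENNReal.ofReal κ * MeasureTheory.volume (Set.Icc (a + x) (b + x)) := by
          rw [setLIntegral_const]
      _ = ENNReal.ofReal κ * ENNReal.ofReal (b + x - (a + x)) := by rw [Real.volume_Icc]
      _ = ENNReal.ofReal (κ * (b - a)) := by
          rw [show b + x - (a + x) = b - a by ring, ← ENNReal.ofReal_mul hκ]
  calc ∫⁻ x, (μ.map Y) (Prod.mk x ⁻¹' {q : ℝ × ℝ | q.2 - q.1 ∈ Set.Icc a b}) ∂(μ.map X)
      ≤ ∫⁻ _, ENNReal.ofReal (κ * (b - a)) ∂(μ.map X) := lintegral_mono hinner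
    _ = ENNReal.ofReal (κ * (b - a)) := by simp

lemma side_bound {M : ℕ} {Ω : Type*} [MeasurableSpace Ω]
    (μ : Measure Ω) [IsProbabilityMeasure μ]
    (r : Fin M → Ω → ℝ) (hrmeas : ∀ m, Measurable (r m))
    (hindep : iIndepFun r μ)
    {κ : ℝ} (hκ : 0 ≤ κ) (f : Fin M → ℝ → ℝ)
    (hdens : ∀ m, Measure.map (r m) μ
      = MeasureTheory.volume.withDensity (fun x => ENNReal.ofReal (f m x)))
    (hbound : ∀ m x, f m x ≤ κ)
    (u v : Fin M → ℝ) {δ : ℝ} (hδ : 0 ≤ δ) (hcoord : ∀ i, |u i - v i| ≤ δ) (m : Fin M) :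
    μ ({ω | ∀ m', m' ≠ m → u m' + r m' ω < u m + r m ω}
        \ {ω | ∀ m', m' ≠ m → v m' + r m' ω < v m + r m ω})
      ≤ ENNReal.ofReal (((M : ℝ) - 1) * (κ * (2 * δ))) := by
  set C : Fin M → Set Ω := fun m' =>
    {ω | r m' ω - r m ω ∈ Set.Icc (v m - v m') (v m - v m' + 2 * δ)} with hC
  have hsub : {ω | ∀ m', m' ≠ m → u m' + r m' ω < u m + r m ω}
      \ {ω | ∀ m', m' ≠ m → v m' + r m' ω < v m + r m ω}
      ⊆ ⋃ m' ∈ Finset.univ.erase m, C m' := by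
    rintro ω ⟨hA, hB⟩
    simp only [Set.mem_setOf_eq, not_forall] at hB
    obtain ⟨m', hm', hle⟩ := hB
    push_neg at hle
    have h1 := hA m' hm'
    have h2 := abs_le.mp (hcoord m)
    have h3 := abs_le.mp (hcoord m')
    refine Set.mem_biUnion (Finset.mem_erase.mpr ⟨hm', Finset.mem_univ _⟩) ?_
    simp only [hC, Set.mem_setOf_eq, Set.mem_Icc]
    exact ⟨by linarith, by linarith⟩
  calc μ ({ω | ∀ m', m' ≠ m → u m' + r m' ω < u m + r m ω}
        \ {ω | ∀ m', m' ≠ m → v m' + r m' ω < v m + r m ω})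
      ≤ μ (⋃ m' ∈ Finset.univ.erase m, C m') := measure_mono hsub
    _ ≤ ∑ m' ∈ Finset.univ.erase m, μ (C m') := measure_biUnion_finset_le _ _
    _ ≤ ∑ m' ∈ Finset.univ.erase m, ENNReal.ofReal (κ * (2 * δ)) := by
        apply Finset.sum_le_sum
        intro m' hm'
        have hne : m' ≠ m := (Finset.mem_erase.mp hm').1
        have hXY : IndepFun (r m) (r m') μ := hindep.indepFun (Ne.symm hne)
        have := key_density_bound μ (hrmeas m) (hrmeas m') hXY hκ (hdens m')
          (hbound m') (v m - v m') (v m - v m' + 2 * δ)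
        have e : v m - v m' + 2 * δ - (v m - v m') = 2 * δ := by ring
        rw [e] at this
        exact this
    _ = (Finset.univ.erase m).card • ENNReal.ofReal (κ * (2 * δ)) := by
        rw [Finset.sum_const]
    _ ≤ ENNReal.ofReal (((M : ℝ) - 1) * (κ * (2 * δ))) := by
        rw [Finset.card_erase_of_mem (Finset.mem_univ m), Finset.card_univ, Fintype.card_fin,
          nsmul_eq_mul]
        rcases Nat.eq_zero_or_pos M with hM0 | hM0
        · subst hM0; exact absurd m.2 (by simp)
        · have hcast : ((M - 1 : ℕ) : ℝ) = (M : ℝ) - 1 := by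
            rw [Nat.cast_sub hM0]; simp
          rw [show ((M - 1 : ℕ) : ENNReal) = ENNReal.ofReal ((M - 1 : ℕ) : ℝ) by
            rw [ENNReal.ofReal_natCast], ← ENNReal.ofReal_mul (by positivity), hcast]

/-- Stability by smoothing: if the routing noises have densities bounded by `κ`,
then the routing probability vectors of two gating outputs `h, hhat` differ by at most
`κ * M² * ‖h - hhat‖_∞` in sup norm (the norm on `Fin M → ℝ` is the sup norm). -/
theorem stmt_0 {M : ℕ} (hM : 1 ≤ M) {Ω : Type*} [MeasurableSpace Ω]
    (μ : Measure Ω) [IsProbabilityMeasure μ]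
    (h hhat : Fin M → ℝ) (r : Fin M → Ω → ℝ)
    (hrmeas : ∀ m, Measurable (r m))
    (hindep : iIndepFun r μ)
    (κ : ℝ) (hκ : 0 < κ)
    (f : Fin M → ℝ → ℝ)
    (hdens : ∀ m, Measure.map (r m) μ
      = MeasureTheory.volume.withDensity (fun x => ENNReal.ofReal (f m x)))
    (hbound : ∀ m x, f m x ≤ κ)
    (hties : ∀ m m', m ≠ m' → μ {ω | h m + r m ω = h m' + r m' ω} = 0)
    (hties' : ∀ m m', m ≠ m' → μ {ω | hhat m + r m ω = hhat m' + r m' ω} = 0)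
    (p phat : Fin M → ℝ)
    (hp : ∀ m, p m = (μ {ω | ∀ m', m' ≠ m → h m' + r m' ω < h m + r m ω}).toReal)
    (hphat : ∀ m, phat m = (μ {ω | ∀ m', m' ≠ m → hhat m' + r m' ω < hhat m + r m ω}).toReal) :
    ‖p - phat‖ ≤ κ * M ^ 2 * ‖h - hhat‖ := by
  set δ : ℝ := ‖h - hhat‖ with hδdef
  have hδ0 : 0 ≤ δ := norm_nonneg _
  have hcoord : ∀ i, |h i - hhat i| ≤ δ := by
    intro i
    have := norm_le_pi_norm (h - hhat) i
    simpa [Real.norm_eq_abs] using this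
  have hcoord' : ∀ i, |hhat i - h i| ≤ δ := fun i => by
    rw [abs_sub_comm]; exact hcoord i
  have hM1 : (1 : ℝ) ≤ M := by exact_mod_cast hM
  have hc : ((M : ℝ) - 1) * (κ * (2 * δ)) ≤ κ * M ^ 2 * δ := by
    nlinarith [mul_nonneg hκ.le hδ0, mul_nonneg (mul_nonneg hκ.le hδ0) (sq_nonneg ((M:ℝ) - 1))]
  have hc0 : 0 ≤ ((M : ℝ) - 1) * (κ * (2 * δ)) := by
    apply mul_nonneg (by linarith) (by positivity)
  have hκ0 : (0 : ℝ) ≤ κ := hκ.le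
  have keym : ∀ m, |p m - phat m| ≤ κ * M ^ 2 * δ := by
    intro m
    set A := {ω | ∀ m', m' ≠ m → h m' + r m' ω < h m + r m ω} with hA
    set B := {ω | ∀ m', m' ≠ m → hhat m' + r m' ω < hhat m + r m ω} with hB
    set c0 : ℝ := ((M : ℝ) - 1) * (κ * (2 * δ)) with hc0def
    have hAB : μ A ≤ μ B + ENNReal.ofReal c0 := by
      calc μ A ≤ μ (B ∪ (A \ B)) := measure_mono (fun ω hω => by
            by_cases hωB : ω ∈ B
            · exact Or.inl hωB
            · exact Or.inr ⟨hω, hωB⟩)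
        _ ≤ μ B + μ (A \ B) := measure_union_le _ _
        _ ≤ μ B + ENNReal.ofReal c0 := by
            exact add_le_add_right (side_bound μ r hrmeas hindep hκ0 f hdens hbound
              h hhat hδ0 hcoord m) _
    have hBA : μ B ≤ μ A + ENNReal.ofReal c0 := by
      calc μ B ≤ μ (A ∪ (B \ A)) := measure_mono (fun ω hω => by
            by_cases hωA : ω ∈ A
            · exact Or.inl hωA
            · exact Or.inr ⟨hω, hωA⟩)
        _ ≤ μ A + μ (B \ A) := measure_union_le _ _
        _ ≤ μ A + ENNReal.ofReal c0 := by
            exact add_le_add_right (side_bound μ r hrmeas hindep hκ0 f hdens hbound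
              hhat h hδ0 hcoord' m) _
    have hconv : ∀ {s t : Set Ω}, μ s ≤ μ t + ENNReal.ofReal c0 →
        (μ s).toReal ≤ (μ t).toReal + c0 := by
      intro s t hst
      have hfin : μ t + ENNReal.ofReal c0 ≠ ⊤ :=
        ENNReal.add_ne_top.mpr ⟨measure_ne_top μ t, ENNReal.ofReal_ne_top⟩
      have := ENNReal.toReal_mono hfin hst
      rwa [ENNReal.toReal_add (measure_ne_top μ t) ENNReal.ofReal_ne_top,
        ENNReal.toReal_ofReal hc0] at this
    rw [hp m, hphat m, abs_sub_le_iff]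
    constructor
    · linarith [hconv hAB]
    · linarith [hconv hBA]
  have hrhs0 : 0 ≤ κ * M ^ 2 * δ := by positivity
  rw [pi_norm_le_iff_of_nonneg hrhs0]
  intro i
  simpa [Real.norm_eq_abs] using keym i
end

section
/- Let h ∈ ℝ^M and let r_1,…,r_M be i.i.d. Unif[0,1] random variables. Define p_m = P(argmax_{m'} (h_{m'} + r_{m'}) = m). Then for any indices m, m' ∈ [M], |p_m − p_{m'}| ≤ M² |h_m − h_{m'}|. -/
open MeasureTheory ProbabilityTheory
open scoped ENNReal

lemma aux_joint_law {M : ℕ} {Ω : Type*} [MeasurableSpace Ω] (μ : Measure Ω)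
    (r : Fin M → Ω → ℝ) (hrmeas : ∀ m, Measurable (r m))
    (hindep : iIndepFun r μ)
    (hunif : ∀ m, Measure.map (r m) μ = MeasureTheory.volume.restrict (Set.Icc (0:ℝ) 1)) :
    Measure.map (fun ω i => r i ω) μ
      = Measure.pi (fun _ : Fin M => MeasureTheory.volume.restrict (Set.Icc (0:ℝ) 1)) := by
  refine (Measure.pi_eq fun s hs => ?_).symm
  rw [Measure.map_apply (measurable_pi_lambda _ fun i => hrmeas i) (MeasurableSet.univ_pi hs)]
  have hpre : (fun ω i => r i ω) ⁻¹' (Set.univ.pi s) = ⋂ i ∈ Finset.univ, r i ⁻¹' s i := by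
    ext ω; simp [Set.mem_pi]
  rw [hpre, hindep.measure_inter_preimage_eq_mul Finset.univ (fun i _ => hs i)]
  refine Finset.prod_congr rfl fun i _ => ?_
  rw [← hunif i, Measure.map_apply (hrmeas i) (hs i)]

lemma aux_pi_perm {M : ℕ} (ν : Measure ℝ) [SigmaFinite ν] (σ : Equiv.Perm (Fin M)) :
    Measure.map (fun (x : Fin M → ℝ) i => x (σ i)) (Measure.pi fun _ => ν)
      = Measure.pi fun _ => ν := by
  refine (Measure.pi_eq fun s hs => ?_).symm
  rw [Measure.map_apply (measurable_pi_lambda _ fun i => measurable_pi_apply (σ i))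
    (MeasurableSet.univ_pi hs)]
  have hpre : (fun (x : Fin M → ℝ) i => x (σ i)) ⁻¹' (Set.univ.pi s)
      = Set.univ.pi (fun j => s (σ.symm j)) := by
    ext x
    simp only [Set.mem_preimage, Set.mem_univ_pi]
    constructor
    · intro hx j; simpa using hx (σ.symm j)
    · intro hx i; simpa using hx (σ i)
  rw [hpre, Measure.pi_pi]
  exact Equiv.prod_comp σ.symm fun j => ν (s j)

lemma aux_diff_bound {Ω : Type*} [MeasurableSpace Ω] (μ : Measure Ω) [IsProbabilityMeasure μ]
    (X Y : Ω → ℝ) (hX : Measurable X) (hY : Measurable Y)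
    (hind : IndepFun X Y μ)
    (hXu : Measure.map X μ = MeasureTheory.volume.restrict (Set.Icc (0:ℝ) 1))
    (hYu : Measure.map Y μ = MeasureTheory.volume.restrict (Set.Icc (0:ℝ) 1))
    (a b : ℝ) :
    μ {ω | X ω - Y ω ∈ Set.Icc a b} ≤ ENNReal.ofReal (b - a) := by
  set ν : Measure ℝ := MeasureTheory.volume.restrict (Set.Icc (0:ℝ) 1) with hν
  have hT : MeasurableSet {p : ℝ × ℝ | p.1 - p.2 ∈ Set.Icc a b} :=
    (measurable_fst.sub measurable_snd) measurableSet_Icc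
  have hmap : Measure.map (fun ω => (X ω, Y ω)) μ = ν.prod ν := by
    rw [(indepFun_iff_map_prod_eq_prod_map_map hX.aemeasurable hY.aemeasurable).mp hind,
      hXu, hYu]
  have hev : {ω | X ω - Y ω ∈ Set.Icc a b}
      = (fun ω => (X ω, Y ω)) ⁻¹' {p : ℝ × ℝ | p.1 - p.2 ∈ Set.Icc a b} := rfl
  rw [hev, ← Measure.map_apply (hX.prodMk hY) hT, hmap, Measure.prod_apply hT]
  have hbound : ∀ x : ℝ, ν (Prod.mk x ⁻¹' {p : ℝ × ℝ | p.1 - p.2 ∈ Set.Icc a b})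
      ≤ ENNReal.ofReal (b - a) := by
    intro x
    have : Prod.mk x ⁻¹' {p : ℝ × ℝ | p.1 - p.2 ∈ Set.Icc a b} = Set.Icc (x - b) (x - a) := by
      ext y
      simp only [Set.mem_preimage, Set.mem_setOf_eq, Set.mem_Icc]
      constructor <;> (intro hy; constructor <;> linarith [hy.1, hy.2])
    rw [this]
    calc ν (Set.Icc (x - b) (x - a)) ≤ MeasureTheory.volume (Set.Icc (x - b) (x - a)) :=
          Measure.restrict_apply_le _ _
      _ = ENNReal.ofReal (b - a) := by rw [Real.volume_Icc]; ring_nf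
  calc ∫⁻ x, ν (Prod.mk x ⁻¹' {p : ℝ × ℝ | p.1 - p.2 ∈ Set.Icc a b}) ∂ν
      ≤ ∫⁻ _, ENNReal.ofReal (b - a) ∂ν := lintegral_mono hbound
    _ = ENNReal.ofReal (b - a) := by
        rw [lintegral_const]
        have : ν Set.univ = 1 := by
          simp [hν, Real.volume_Icc]
        rw [this, mul_one]

/-- With i.i.d. `Unif[0,1]` routing noises, the routing probabilities satisfy
`|p_m − p_{m'}| ≤ M² |h_m − h_{m'}|`. -/
theorem stmt_1 {M : ℕ} (hM : 1 ≤ M) {Ω : Type*} [MeasurableSpace Ω]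
    (μ : Measure Ω) [IsProbabilityMeasure μ]
    (h : Fin M → ℝ) (r : Fin M → Ω → ℝ)
    (hrmeas : ∀ m, Measurable (r m))
    (hindep : iIndepFun r μ)
    (hunif : ∀ m, Measure.map (r m) μ = MeasureTheory.volume.restrict (Set.Icc (0:ℝ) 1))
    (hties : ∀ m m', m ≠ m' → μ {ω | h m + r m ω = h m' + r m' ω} = 0)
    (p : Fin M → ℝ)
    (hp : ∀ m, p m = (μ {ω | ∀ m', m' ≠ m → h m' + r m' ω < h m + r m ω}).toReal) :
    ∀ m m', |p m - p m'| ≤ M ^ 2 * |h m - h m'| := by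
  intro m m'
  rcases eq_or_ne m m' with rfl | hne
  · simp
  have hM2 : 2 ≤ M := by
    rcases Nat.lt_or_ge M 2 with hlt | hge
    · exfalso
      have hM1 : M = 1 := le_antisymm (by omega) hM
      subst hM1
      exact hne (Subsingleton.elim m m')
    · exact hge
  set ν : Measure ℝ := MeasureTheory.volume.restrict (Set.Icc (0:ℝ) 1) with hνdef
  set σ : Equiv.Perm (Fin M) := Equiv.swap m m' with hσdef
  set c : ℝ := |h m - h m'| with hcdef
  have hc0 : 0 ≤ c := abs_nonneg _
  have hσm : σ m = m' := Equiv.swap_apply_left m m'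
  set S : Set (Fin M → ℝ) := {x | ∀ j, j ≠ m → h (σ j) + x j < h m' + x m} with hSdef
  have hS : MeasurableSet S := by
    have hS1 : S = ⋂ j, {x : Fin M → ℝ | j ≠ m → h (σ j) + x j < h m' + x m} := by
      ext x; simp [hSdef, Set.mem_iInter]
    rw [hS1]
    refine MeasurableSet.iInter fun j => ?_
    by_cases hj : j = m
    · convert MeasurableSet.univ
      ext x; simp [hj]
    · have he : {x : Fin M → ℝ | j ≠ m → h (σ j) + x j < h m' + x m}
          = {x : Fin M → ℝ | h (σ j) + x j < h m' + x m} := by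
        ext x; simp [hj]
      rw [he]
      exact measurableSet_lt ((measurable_pi_apply j).const_add _)
        ((measurable_pi_apply m).const_add _)
  have hJ : Measurable (fun ω i => r i ω) := measurable_pi_lambda _ hrmeas
  have hJσ : Measurable (fun ω i => r (σ i) ω) :=
    measurable_pi_lambda _ fun i => hrmeas (σ i)
  have hπ := aux_joint_law μ r hrmeas hindep hunif
  set E : Set Ω := {ω | ∀ j, j ≠ m → h j + r j ω < h m + r m ω} with hEdef
  set A : Set Ω := {ω | ∀ j, j ≠ m → h (σ j) + r j ω < h m' + r m ω} with hAdef
  have hA_pre : A = (fun ω i => r i ω) ⁻¹' S := rfl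
  have hF_eq : {ω | ∀ k, k ≠ m' → h k + r k ω < h m' + r m' ω}
      = (fun ω i => r (σ i) ω) ⁻¹' S := by
    ext ω
    simp only [Set.mem_setOf_eq, Set.mem_preimage, hSdef]
    constructor
    · intro hw j hj
      have h1 : σ j ≠ m' := fun hc' => hj (σ.injective (hc'.trans hσm.symm))
      have h2 := hw (σ j) h1
      rw [hσm]
      exact h2
    · intro hw k hk
      have h1 : σ.symm k ≠ m := by
        intro hc'
        apply hk
        have := congrArg σ hc'
        rw [Equiv.apply_symm_apply, hσm] at this
        exact this
      have h2 := hw (σ.symm k) h1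
      rw [Equiv.apply_symm_apply, hσm] at h2
      exact h2
  have hmapσ : Measure.map (fun ω i => r (σ i) ω) μ = Measure.pi fun _ : Fin M => ν := by
    have hco : (fun ω i => r (σ i) ω)
        = (fun (x : Fin M → ℝ) i => x (σ i)) ∘ (fun ω i => r i ω) := rfl
    rw [hco, ← Measure.map_map (measurable_pi_lambda _ fun i => measurable_pi_apply (σ i)) hJ,
      hπ]
    exact aux_pi_perm ν σ
  have hμF : μ {ω | ∀ k, k ≠ m' → h k + r k ω < h m' + r m' ω} = μ A := by
    rw [hF_eq, hA_pre, ← Measure.map_apply hJσ hS, ← Measure.map_apply hJ hS, hmapσ, hπ]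
  set C : Fin M → Set Ω := fun j => {ω | r j ω - r m ω ∈ Set.Icc
    (min (h m - h j) (h m' - h (σ j))) (max (h m - h j) (h m' - h (σ j)))} with hCdef
  have hCbound : ∀ j, j ≠ m → μ (C j) ≤ ENNReal.ofReal (2 * c) := by
    intro j hj
    have hind := hindep.indepFun hj
    have h1 := aux_diff_bound μ (r j) (r m) (hrmeas j) (hrmeas m) hind (hunif j) (hunif m)
      (min (h m - h j) (h m' - h (σ j))) (max (h m - h j) (h m' - h (σ j)))
    rw [hCdef]
    refine h1.trans (ENNReal.ofReal_le_ofReal ?_)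
    rw [max_sub_min_eq_abs]
    have hσj : |h (σ j) - h j| ≤ c := by
      rcases eq_or_ne j m' with rfl | hj'
      · rw [hσdef, Equiv.swap_apply_right, hcdef, abs_sub_comm]
      · rw [hσdef, Equiv.swap_apply_of_ne_of_ne hj hj']
        simpa using hc0
    have habs : |h m' - h (σ j) - (h m - h j)| = |h m - h m' + (h (σ j) - h j)| := by
      rw [abs_sub_comm]
      congr 1
      ring
    rw [habs]
    calc |h m - h m' + (h (σ j) - h j)| ≤ |h m - h m'| + |h (σ j) - h j| := abs_add_le _ _
      _ ≤ c + c := add_le_add le_rfl hσj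
      _ = 2 * c := by ring
  have hsub1 : E \ A ⊆ ⋃ j ∈ Finset.univ.erase m, C j := by
    rintro ω ⟨hωE, hωA⟩
    simp only [hAdef, Set.mem_setOf_eq] at hωA
    push_neg at hωA
    obtain ⟨j, hj, hge⟩ := hωA
    have hlt := hωE j hj
    refine Set.mem_biUnion (Finset.mem_erase.mpr ⟨hj, Finset.mem_univ j⟩) ?_
    simp only [hCdef, Set.mem_setOf_eq, Set.mem_Icc]
    exact ⟨le_trans (min_le_right _ _) (by linarith), le_trans (by linarith) (le_max_left _ _)⟩
  have hsub2 : A \ E ⊆ ⋃ j ∈ Finset.univ.erase m, C j := by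
    rintro ω ⟨hωA, hωE⟩
    simp only [hEdef, Set.mem_setOf_eq] at hωE
    push_neg at hωE
    obtain ⟨j, hj, hge⟩ := hωE
    have hlt := hωA j hj
    refine Set.mem_biUnion (Finset.mem_erase.mpr ⟨hj, Finset.mem_univ j⟩) ?_
    simp only [hCdef, Set.mem_setOf_eq, Set.mem_Icc]
    exact ⟨le_trans (min_le_left _ _) (by linarith), le_trans (by linarith) (le_max_right _ _)⟩
  set K : ENNReal := (M : ENNReal) * ENNReal.ofReal (2 * c) with hKdef
  have hKsub : ∀ {s : Set Ω}, s ⊆ ⋃ j ∈ Finset.univ.erase m, C j → μ s ≤ K := by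
    intro s hs
    refine (measure_mono hs).trans ?_
    refine (measure_biUnion_finset_le _ _).trans ?_
    calc ∑ j ∈ Finset.univ.erase m, μ (C j)
        ≤ ∑ _j ∈ Finset.univ.erase m, ENNReal.ofReal (2 * c) :=
          Finset.sum_le_sum fun j hj => hCbound j (Finset.mem_erase.mp hj).1
      _ = ((Finset.univ.erase m).card : ℝ≥0∞) * ENNReal.ofReal (2 * c) := by
          rw [Finset.sum_const, nsmul_eq_mul]
      _ ≤ K := by
          rw [hKdef]
          refine mul_le_mul_left ?_ _
          have hcard : (Finset.univ.erase m).card ≤ M := by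
            simpa using Finset.card_le_univ (Finset.univ.erase m)
          exact_mod_cast Nat.cast_le.mpr hcard
  have hKne : K ≠ ⊤ := by
    rw [hKdef]
    exact ENNReal.mul_ne_top (ENNReal.natCast_ne_top M) ENNReal.ofReal_ne_top
  have hKtoReal : K.toReal = M * (2 * c) := by
    rw [hKdef, ENNReal.toReal_mul, ENNReal.toReal_natCast,
      ENNReal.toReal_ofReal (by linarith : (0:ℝ) ≤ 2 * c)]
  have hEfin : μ E ≠ ⊤ := measure_ne_top μ E
  have hAfin : μ A ≠ ⊤ := measure_ne_top μ A
  have h1 : (μ E).toReal ≤ (μ A).toReal + K.toReal := by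
    have hle : μ E ≤ μ A + K := by
      calc μ E ≤ μ (A ∪ (E \ A)) := measure_mono (by
            intro ω hω
            by_cases hA' : ω ∈ A
            exacts [Or.inl hA', Or.inr ⟨hω, hA'⟩])
        _ ≤ μ A + μ (E \ A) := measure_union_le _ _
        _ ≤ μ A + K := add_le_add le_rfl (hKsub hsub1)
    calc (μ E).toReal ≤ (μ A + K).toReal :=
        ENNReal.toReal_mono (ENNReal.add_ne_top.mpr ⟨hAfin, hKne⟩) hle
      _ = (μ A).toReal + K.toReal := ENNReal.toReal_add hAfin hKne
  have h2 : (μ A).toReal ≤ (μ E).toReal + K.toReal := by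
    have hle : μ A ≤ μ E + K := by
      calc μ A ≤ μ (E ∪ (A \ E)) := measure_mono (by
            intro ω hω
            by_cases hE' : ω ∈ E
            exacts [Or.inl hE', Or.inr ⟨hω, hE'⟩])
        _ ≤ μ E + μ (A \ E) := measure_union_le _ _
        _ ≤ μ E + K := add_le_add le_rfl (hKsub hsub2)
    calc (μ A).toReal ≤ (μ E + K).toReal :=
        ENNReal.toReal_mono (ENNReal.add_ne_top.mpr ⟨hEfin, hKne⟩) hle
      _ = (μ E).toReal + K.toReal := ENNReal.toReal_add hEfin hKne
  have hpm : p m = (μ E).toReal := hp m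
  have hpm' : p m' = (μ A).toReal := by rw [hp m', hμF]
  have hfin : K.toReal ≤ (M : ℝ) ^ 2 * c := by
    rw [hKtoReal]
    have hMR : (2:ℝ) ≤ M := by exact_mod_cast hM2
    nlinarith [hc0, hMR]
  rw [hpm, hpm', abs_sub_le_iff]
  constructor <;> linarith [h1, h2, hfin]
end

section
/- Suppose (X, y) is a random labeled point generated as follows: draw an ordered pair (k, k') uniformly from pairs of distinct elements of {1,…,K}, draw y uniform on {±1}, draw a Rademacher variable ε ∈ {±1}, draw positive random variables α, γ that are i.i.d. with common distribution D, and draw a noise matrix ξ. Set X = (α y v_k, β c_k, γ ε v_{k'}, ξ) where v_1,…,v_K, c_1,…,c_K are fixed orthonormal vectors. Then for any function F of the form F(X) = f(X^{(1)}) + f(X^{(2)}) + f(X^{(3)}) + Σ_{p≥4} f(X^{(p)}), where f : ℝ^d → ℝ is arbitrary, the misclassification probability satisfies P(y·F(X) ≤ 0) ≥ 1/8. -/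
open MeasureTheory ProbabilityTheory

private lemma key_sum {E : Type*} [SMul ℝ E] (f : E → ℝ) (vk vk' ck ck' : E)
    (a g b R : ℝ) (y : Bool)
    (sgn : Bool → ℝ) (hsgn : sgn = fun b => if b then 1 else -1) :
    sgn y * (f ((a * sgn y) • vk) + f (b • ck) + f ((g * sgn (!y)) • vk') + R)
      + sgn (!y) * (f ((a * sgn (!y)) • vk) + f (b • ck) + f ((g * sgn (!(!y))) • vk') + R)
      + sgn y * (f ((g * sgn y) • vk') + f (b • ck') + f ((a * sgn (!y)) • vk) + R)
      + sgn (!y) * (f ((g * sgn (!y)) • vk') + f (b • ck') + f ((a * sgn (!(!y))) • vk) + R)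
      = 0 := by
  subst hsgn
  cases y <;> simp [mul_one, mul_neg_one] <;> ring

private lemma mp_not :
    MeasurePreserving not (PMF.uniformOfFintype Bool).toMeasure
      (PMF.uniformOfFintype Bool).toMeasure := by
  refine ⟨measurable_from_top, Measure.ext_of_singleton fun a => ?_⟩
  rw [Measure.map_apply measurable_from_top (measurableSet_singleton a)]
  have : not ⁻¹' {a} = {!a} := by ext x; cases a <;> cases x <;> simp
  rw [this]
  simp [PMF.toMeasure_apply_singleton _ _ (measurableSet_singleton _),
    PMF.uniformOfFintype_apply]

private lemma mp_swapK {K : ℕ} :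
    MeasurePreserving (Prod.swap : Fin K × Fin K → Fin K × Fin K)
      (uniformOn {q : Fin K × Fin K | q.1 ≠ q.2})
      (uniformOn {q : Fin K × Fin K | q.1 ≠ q.2}) := by
  set S : Set (Fin K × Fin K) := {q | q.1 ≠ q.2} with hS
  have hSm : MeasurableSet S := S.to_countable.measurableSet
  refine ⟨measurable_swap, Measure.ext_of_singleton fun a => ?_⟩
  rw [Measure.map_apply measurable_swap (measurableSet_singleton a)]
  have hpre : (Prod.swap : Fin K × Fin K → Fin K × Fin K) ⁻¹' {a} = {a.swap} := by
    ext x; simp [Prod.ext_iff, eq_comm, and_comm]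
  show uniformOn S _ = uniformOn S _
  rw [hpre, uniformOn, cond_apply hSm, cond_apply hSm]
  congr 1
  rcases Classical.em (a ∈ S) with h | h
  · have h' : a.swap ∈ S := fun hc => h hc.symm
    rw [Set.inter_eq_self_of_subset_right (by simpa using h'),
        Set.inter_eq_self_of_subset_right (by simpa using h),
        Measure.count_singleton, Measure.count_singleton]
  · have h' : a.swap ∉ S := fun hc => h fun he => hc he.symm
    have e1 : S ∩ {a.swap} = ∅ := by
      ext x
      simp only [Set.mem_inter_iff, Set.mem_singleton_iff, Set.mem_empty_iff_false, iff_false,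
        not_and]
      rintro hx rfl
      exact h' hx
    have e2 : S ∩ {a} = ∅ := by
      ext x
      simp only [Set.mem_inter_iff, Set.mem_singleton_iff, Set.mem_empty_iff_false, iff_false,
        not_and]
      rintro hx rfl
      exact h hx
    rw [e1, e2]

private lemma mp_swap_abg {X : Type*} [MeasurableSpace X] (D : Measure ℝ) (R : Measure X)
    [IsProbabilityMeasure D] [IsProbabilityMeasure R] :
    MeasurePreserving (fun p : ℝ × ℝ × X => (p.2.1, p.1, p.2.2))
      (D.prod (D.prod R)) (D.prod (D.prod R)) := by
  have h1 := (measurePreserving_prodAssoc D D R).symm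
  have h2 : MeasurePreserving (Prod.map (Prod.swap : ℝ × ℝ → ℝ × ℝ) (id : X → X))
      ((D.prod D).prod R) ((D.prod D).prod R) :=
    (Measure.measurePreserving_swap).prod (MeasurePreserving.id R)
  have h3 := measurePreserving_prodAssoc D D R
  exact (h3.comp h2).comp h1

private lemma pigeon {Ω : Type*} [MeasurableSpace Ω] (μ : Measure Ω) (g : Ω → ℝ)
    (hg : Measurable g) (S : Set Ω) (hS : MeasurableSet S)
    (T1 T2 T3 : Ω → Ω)
    (mp1 : MeasurePreserving T1 μ μ) (mp2 : MeasurePreserving T2 μ μ)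
    (mp3 : MeasurePreserving T3 μ μ)
    (hT : ∀ ω ∈ S, T1 ω ∈ S ∧ T2 ω ∈ S ∧ T3 ω ∈ S)
    (hsum : ∀ ω ∈ S, g ω + g (T1 ω) + g (T2 ω) + g (T3 ω) = 0)
    (hSμ : μ S = 1/2) :
    (1/8 : ENNReal) ≤ μ {ω | g ω ≤ 0} := by
  set Bad : Set Ω := {ω | g ω ≤ 0} with hBad
  have hBadM : MeasurableSet Bad := hg measurableSet_Iic
  have hsub : S ⊆ (Bad ∩ S) ∪ (T1 ⁻¹' (Bad ∩ S) ∪ (T2 ⁻¹' (Bad ∩ S) ∪ T3 ⁻¹' (Bad ∩ S))) := by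
    intro ω hω
    obtain ⟨m1, m2, m3⟩ := hT ω hω
    by_contra hcon
    simp only [Set.mem_union, Set.mem_preimage, Set.mem_inter_iff, not_or, not_and] at hcon
    obtain ⟨h0, h1, h2, h3⟩ := hcon
    have g0 : ¬ g ω ≤ 0 := fun h => h0 h hω
    have g1 : ¬ g (T1 ω) ≤ 0 := fun h => h1 h m1
    have g2 : ¬ g (T2 ω) ≤ 0 := fun h => h2 h m2
    have g3 : ¬ g (T3 ω) ≤ 0 := fun h => h3 h m3
    push_neg at g0 g1 g2 g3
    have hpos := add_pos (add_pos (add_pos g0 g1) g2) g3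
    rw [hsum ω hω] at hpos
    exact lt_irrefl _ hpos
  have hmeasE : MeasurableSet (Bad ∩ S) := hBadM.inter hS
  have h1 : μ (T1 ⁻¹' (Bad ∩ S)) = μ (Bad ∩ S) := mp1.measure_preimage hmeasE.nullMeasurableSet
  have h2 : μ (T2 ⁻¹' (Bad ∩ S)) = μ (Bad ∩ S) := mp2.measure_preimage hmeasE.nullMeasurableSet
  have h3 : μ (T3 ⁻¹' (Bad ∩ S)) = μ (Bad ∩ S) := mp3.measure_preimage hmeasE.nullMeasurableSet
  have hchain : (1/2 : ENNReal) ≤ 4 * μ Bad := by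
    calc (1/2 : ENNReal) = μ S := hSμ.symm
      _ ≤ μ ((Bad ∩ S) ∪ (T1 ⁻¹' (Bad ∩ S) ∪ (T2 ⁻¹' (Bad ∩ S) ∪ T3 ⁻¹' (Bad ∩ S)))) :=
          measure_mono hsub
      _ ≤ μ (Bad ∩ S) + (μ (T1 ⁻¹' (Bad ∩ S)) + (μ (T2 ⁻¹' (Bad ∩ S))
            + μ (T3 ⁻¹' (Bad ∩ S)))) :=
          le_trans (measure_union_le _ _) (add_le_add_right (le_trans (measure_union_le _ _)
            (add_le_add_right (measure_union_le _ _) _)) _)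
      _ = 4 * μ (Bad ∩ S) := by rw [h1, h2, h3]; ring
      _ ≤ 4 * μ Bad := mul_le_mul_right (measure_mono Set.inter_subset_left) 4
  have h4 : (4 : ENNReal)⁻¹ * (1/2) ≤ 4⁻¹ * (4 * μ Bad) := mul_le_mul_right hchain _
  rw [← mul_assoc, ENNReal.inv_mul_cancel (by norm_num) (by norm_num), one_mul] at h4
  refine le_trans (le_of_eq ?_) h4
  rw [one_div, one_div, ← ENNReal.mul_inv (Or.inl (by norm_num)) (Or.inl (by norm_num))]
  norm_num

set_option synthInstance.maxHeartbeats 1000000 in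
set_option maxHeartbeats 1000000 in
/-- Single expert performs poorly: for data `X = (αy v_k, β c_k, γε v_{k'}, ξ)` with
`(k,k')` uniform over distinct pairs, `y, ε` independent uniform signs, `α, γ` i.i.d.
positive with common law `D`, `β` positive with law `Dβ`, and independent noise patches `ξ`,
any patch-symmetric classifier `F(X) = ∑_p f(X^{(p)})` has error `P(y F(X) ≤ 0) ≥ 1/8`. -/
theorem stmt_3 {K d P : ℕ} (hK : 2 ≤ K) (hP : 3 ≤ P)
    (v c : Fin K → EuclideanSpace ℝ (Fin d))
    (horth : Orthonormal ℝ (Sum.elim v c))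
    (D Dβ : Measure ℝ) [IsProbabilityMeasure D] [IsProbabilityMeasure Dβ]
    (hD : D (Set.Iic 0) = 0) (hDβ : Dβ (Set.Iic 0) = 0)
    (ν : Measure (Fin P → EuclideanSpace ℝ (Fin d))) [IsProbabilityMeasure ν]
    (f : EuclideanSpace ℝ (Fin d) → ℝ) (hf : Measurable f)
    (sgn : Bool → ℝ) (hsgn : sgn = fun b => if b then 1 else -1)
    (μ : Measure ((Fin K × Fin K) × Bool × Bool × ℝ × ℝ × ℝ ×
        (Fin P → EuclideanSpace ℝ (Fin d))))
    (hμ : μ = (uniformOn {q : Fin K × Fin K | q.1 ≠ q.2}).prod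
        (((PMF.uniformOfFintype Bool).toMeasure).prod
          (((PMF.uniformOfFintype Bool).toMeasure).prod
            (D.prod (D.prod (Dβ.prod ν)))))) :
    (1/8 : ENNReal) ≤ μ {ω | sgn ω.2.1 *
        (f ((ω.2.2.2.1 * sgn ω.2.1) • v ω.1.1)
          + f (ω.2.2.2.2.2.1 • c ω.1.1)
          + f ((ω.2.2.2.2.1 * sgn ω.2.2.1) • v ω.1.2)
          + ∑ q ∈ Finset.univ.filter (fun q : Fin P => 3 ≤ (q : ℕ)), f (ω.2.2.2.2.2.2 q))
        ≤ 0} := by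
  refine pigeon μ _ ?_ {ω | ω.2.2.1 = !ω.2.1} ?_
    (fun ω => (ω.1, !ω.2.1, !ω.2.2.1, ω.2.2.2))
    (fun ω => (ω.1.swap, ω.2.1, ω.2.2.1, ω.2.2.2.2.1, ω.2.2.2.1, ω.2.2.2.2.2))
    (fun ω => (ω.1.swap, !ω.2.1, !ω.2.2.1, ω.2.2.2.2.1, ω.2.2.2.1, ω.2.2.2.2.2))
    ?_ ?_ ?_ ?_ ?_ ?_
  · -- measurability of g
    have hv : Measurable v := measurable_from_top
    have hc : Measurable c := measurable_from_top
    have hs : Measurable sgn := measurable_from_top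
    fun_prop
  · -- S measurable
    have : {ω : (Fin K × Fin K) × Bool × Bool × ℝ × ℝ × ℝ ×
        (Fin P → EuclideanSpace ℝ (Fin d)) | ω.2.2.1 = !ω.2.1}
        = (fun ω : (Fin K × Fin K) × Bool × Bool × ℝ × ℝ × ℝ ×
            (Fin P → EuclideanSpace ℝ (Fin d)) => (ω.2.1, ω.2.2.1)) ⁻¹'
          {p : Bool × Bool | p.2 = !p.1} := rfl
    rw [this]
    exact ((measurable_fst.comp measurable_snd).prodMk
      (measurable_fst.comp (measurable_snd.comp measurable_snd)))
      (Set.to_countable _).measurableSet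
  · -- T1 measure preserving
    rw [hμ]
    exact (MeasurePreserving.id _).prod (mp_not.prod (mp_not.prod (MeasurePreserving.id _)))
  · -- T2 measure preserving
    rw [hμ]
    exact mp_swapK.prod ((MeasurePreserving.id _).prod ((MeasurePreserving.id _).prod
      (mp_swap_abg D (Dβ.prod ν))))
  · -- T3 measure preserving
    rw [hμ]
    exact mp_swapK.prod (mp_not.prod (mp_not.prod (mp_swap_abg D (Dβ.prod ν))))
  · -- T's preserve S
    rintro ⟨⟨k, k'⟩, y, e, r⟩ hω
    have he : e = !y := hω
    subst he
    exact ⟨rfl, rfl, rfl⟩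
  · -- sum identity
    rintro ⟨⟨k, k'⟩, y, e, a, gam, b, ξ⟩ hω
    have he : e = !y := hω
    subst he
    exact key_sum f (v k) (v k') (c k) (c k')  a gam b
      (∑ q ∈ Finset.univ.filter (fun q : Fin P => 3 ≤ (q : ℕ)), f (ξ q)) y sgn hsgn
  · -- μ S = 1/2
    rw [hμ]
    have hrw : {ω : (Fin K × Fin K) × Bool × Bool × ℝ × ℝ × ℝ ×
        (Fin P → EuclideanSpace ℝ (Fin d)) | ω.2.2.1 = !ω.2.1}
        = (Set.univ : Set (Fin K × Fin K)) ×ˢ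
        (({true} : Set Bool) ×ˢ (({false} : Set Bool) ×ˢ Set.univ) ∪
         ({false} : Set Bool) ×ˢ (({true} : Set Bool) ×ˢ Set.univ)) := by
      ext ⟨q, y, e, r⟩
      simp only [Set.mem_setOf_eq, Set.mem_prod, Set.mem_union, Set.mem_singleton_iff,
        Set.mem_univ, true_and, and_true]
      cases y <;> cases e <;> simp
    rw [hrw, Measure.prod_prod]
    have hdisj : Disjoint (({true} : Set Bool) ×ˢ (({false} : Set Bool) ×ˢ
        (Set.univ : Set (ℝ × ℝ × ℝ × (Fin P → EuclideanSpace ℝ (Fin d))))))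
        (({false} : Set Bool) ×ˢ (({true} : Set Bool) ×ˢ Set.univ)) := by
      rw [Set.disjoint_left]
      rintro ⟨x, y⟩ ⟨hx, -⟩ ⟨hx', -⟩
      simp_all
    have hB : ∀ b : Bool, (PMF.uniformOfFintype Bool).toMeasure {b} = 2⁻¹ := by
      intro b
      rw [PMF.toMeasure_apply_singleton _ _ (measurableSet_singleton _)]
      simp [PMF.uniformOfFintype_apply]
    rw [measure_union hdisj ((measurableSet_singleton _).prod
      ((measurableSet_singleton _).prod MeasurableSet.univ)),
      Measure.prod_prod, Measure.prod_prod, Measure.prod_prod, Measure.prod_prod, hB, hB]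
    have hQ : (uniformOn {q : Fin K × Fin K | q.1 ≠ q.2}) Set.univ = 1 := by
      have hne : ({q : Fin K × Fin K | q.1 ≠ q.2}).Nonempty := by
        refine ⟨(⟨0, by omega⟩, ⟨1, by omega⟩), ?_⟩
        intro h
        have := congrArg Fin.val h
        simp at this
      haveI := uniformOn_isProbabilityMeasure
        (Set.toFinite {q : Fin K × Fin K | q.1 ≠ q.2}) hne
      exact measure_univ
    rw [hQ, one_mul, measure_univ, mul_one]
    have h2 : (2⁻¹ : ENNReal) * 2⁻¹ + 2⁻¹ * 2⁻¹ = 2⁻¹ * (2⁻¹ + 2⁻¹) := by ring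
    rw [h2, ENNReal.inv_two_add_inv_two, mul_one, one_div]
end

section
/- Let a_1,…,a_M be i.i.d. standard Gaussian random variables and let a^{(1)} ≥ a^{(2)} ≥ … ≥ a^{(M)} denote their order statistics. Then for any G ∈ (0,1), P(a^{(2)} ≥ (1 − G)·a^{(1)}) ≤ G·M². -/
open MeasureTheory ProbabilityTheory
open scoped ENNReal NNReal

lemma aux_sqrt_inv_le_one : (Real.sqrt (2 * Real.pi))⁻¹ ≤ 1 := by
  rw [inv_le_one₀ (Real.sqrt_pos.mpr (by positivity)), Real.one_le_sqrt]
  nlinarith [Real.pi_gt_three]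

lemma aux_pdf_eq (x : ℝ) : gaussianPDFReal 0 1 x
    = (Real.sqrt (2 * Real.pi))⁻¹ * Real.exp (-(1/2) * x ^ 2) := by
  simp only [gaussianPDFReal, NNReal.coe_one, mul_one, sub_zero]
  rw [show -x ^ 2 / 2 = -(1/2) * x ^ 2 by ring]

lemma aux_pdf_le_one (x : ℝ) : gaussianPDFReal 0 1 x ≤ 1 := by
  rw [aux_pdf_eq]
  apply mul_le_one₀ aux_sqrt_inv_le_one (Real.exp_pos _).le
  rw [Real.exp_le_one_iff]
  nlinarith [sq_nonneg x]

lemma aux_int_Ioi : ∫ x in Set.Ioi (0:ℝ), x * Real.exp (-(1/2) * x ^ 2) = 1 := by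
  have hb : (0:ℝ) < 1/2 := by norm_num
  have A : ∀ x ∈ Set.Ici (0:ℝ), HasDerivAt (fun x : ℝ => -Real.exp (-(1/2) * x ^ 2))
      (x * Real.exp (-(1/2) * x ^ 2)) x := by
    intro x _
    have h1 : HasDerivAt (fun x : ℝ => -(1/2) * x ^ 2) (-(1/2) * (2 * x)) x := by
      simpa using (hasDerivAt_pow 2 x).const_mul (-(1/2 : ℝ))
    have := (h1.exp).neg
    exact this.congr_deriv (by ring)
  have B : Filter.Tendsto (fun x : ℝ => -Real.exp (-(1/2) * x ^ 2)) Filter.atTop (nhds 0) := by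
    rw [show (0:ℝ) = -0 by ring]
    refine Filter.Tendsto.neg ?_
    refine Real.tendsto_exp_atBot.comp ?_
    exact (Filter.tendsto_pow_atTop two_ne_zero).const_mul_atTop_of_neg (by norm_num)
  have C := integral_Ioi_of_hasDerivAt_of_tendsto' A
    ((integrable_mul_exp_neg_mul_sq hb).integrableOn) B
  simpa using C

lemma aux_gauss_mean : ∫⁻ x, ENNReal.ofReal x ∂(gaussianReal 0 1) ≤ 1 := by
  set g : ℝ → ℝ := fun x => gaussianPDFReal 0 1 x * max x 0 with hg
  have hgnn : ∀ x, 0 ≤ g x := fun x =>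
    mul_nonneg (gaussianPDFReal_nonneg 0 1 x) (le_max_right _ _)
  have hgmeas : Measurable g :=
    (measurable_gaussianPDFReal 0 1).mul (measurable_id.max measurable_const)
  have hgint : Integrable g := by
    refine Integrable.mono' ((integrable_mul_exp_neg_mul_sq (by norm_num : (0:ℝ) < 1/2)).abs)
      hgmeas.aestronglyMeasurable (Filter.Eventually.of_forall fun x => ?_)
    rw [Real.norm_eq_abs, abs_of_nonneg (hgnn x), abs_mul,
      abs_of_nonneg (Real.exp_pos (-(1/2) * x ^ 2)).le]
    have h1 : max x 0 ≤ |x| := max_le (le_abs_self x) (abs_nonneg x)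
    calc g x = (Real.sqrt (2 * Real.pi))⁻¹ * Real.exp (-(1/2) * x ^ 2) * max x 0 := by
          rw [hg]; simp only; rw [aux_pdf_eq]
      _ ≤ 1 * Real.exp (-(1/2) * x ^ 2) * |x| := by
          gcongr
          · exact aux_sqrt_inv_le_one
      _ = |x| * Real.exp (-(1/2) * x ^ 2) := by ring
  have hint_g : ∫ x, g x = (Real.sqrt (2 * Real.pi))⁻¹ := by
    rw [← setIntegral_eq_integral_of_forall_compl_eq_zero (s := Set.Ioi (0:ℝ))]
    · rw [setIntegral_congr_fun measurableSet_Ioi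
        (g := fun x => (Real.sqrt (2 * Real.pi))⁻¹ * (x * Real.exp (-(1/2) * x ^ 2)))]
      · rw [integral_const_mul, aux_int_Ioi, mul_one]
      · intro x hx
        simp only [Set.mem_Ioi] at hx
        rw [hg]; simp only
        rw [aux_pdf_eq, max_eq_left hx.le]
        ring
    · intro x hx
      simp only [Set.mem_Ioi, not_lt] at hx
      rw [hg]; simp only
      rw [max_eq_right hx, mul_zero]
  have key : ∫⁻ x, ENNReal.ofReal x ∂(gaussianReal 0 1) = ENNReal.ofReal (∫ x, g x) := by
    rw [gaussianReal_of_var_ne_zero 0 one_ne_zero,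
      lintegral_withDensity_eq_lintegral_mul _ (measurable_gaussianPDF 0 1)
        ENNReal.measurable_ofReal]
    have hpt : ∀ x : ℝ, (gaussianPDF 0 1 * ENNReal.ofReal) x = ENNReal.ofReal (g x) := by
      intro x
      simp only [Pi.mul_apply, gaussianPDF, hg]
      rw [ENNReal.ofReal_mul (gaussianPDFReal_nonneg 0 1 x)]
      congr 1
      rcases le_total x 0 with h | h
      · rw [max_eq_right h, ENNReal.ofReal_eq_zero.mpr h, ENNReal.ofReal_zero]
      · rw [max_eq_left h]
    rw [lintegral_congr hpt, ← ofReal_integral_eq_lintegral_ofReal hgint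
      (Filter.Eventually.of_forall hgnn)]
  rw [key, hint_g, show (1:ℝ≥0∞) = ENNReal.ofReal 1 by simp]
  exact ENNReal.ofReal_le_ofReal aux_sqrt_inv_le_one

lemma aux_gauss_Icc (c d : ℝ) :
    gaussianReal 0 1 (Set.Icc c d) ≤ ENNReal.ofReal (d - c) := by
  rw [gaussianReal_apply 0 one_ne_zero]
  calc ∫⁻ x in Set.Icc c d, gaussianPDF 0 1 x
      ≤ ∫⁻ x in Set.Icc c d, (1:ℝ≥0∞) := by
        refine lintegral_mono fun x => ?_
        rw [gaussianPDF, show (1:ℝ≥0∞) = ENNReal.ofReal 1 by simp]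
        exact ENNReal.ofReal_le_ofReal (aux_pdf_le_one x)
    _ = volume (Set.Icc c d) := setLIntegral_one _
    _ = ENNReal.ofReal (d - c) := Real.volume_Icc

/-- For `M` i.i.d. standard Gaussians, the probability that the second largest order
statistic exceeds `(1 − G)` times the largest is at most `G·M²`. The event is expressed
as: there exist distinct indices `m₁ ≠ m₂` with `a_{m₁}` maximal and
`a_{m₂} ≥ (1 − G) a_{m₁}`. -/
theorem stmt_12 {M : ℕ} (hM : 2 ≤ M) {Ω : Type*} [MeasurableSpace Ω]
    (μ : Measure Ω) [IsProbabilityMeasure μ] (a : Fin M → Ω → ℝ)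
    (hmeas : ∀ m, Measurable (a m))
    (hindep : iIndepFun a μ)
    (hgauss : ∀ m, Measure.map (a m) μ = gaussianReal 0 1)
    (G : ℝ) (hG : G ∈ Set.Ioo (0 : ℝ) 1) :
    μ {ω | ∃ m₁ m₂, m₁ ≠ m₂ ∧ (∀ j, a j ω ≤ a m₁ ω) ∧
        (1 - G) * a m₁ ω ≤ a m₂ ω} ≤ ENNReal.ofReal (G * M ^ 2) := by
  obtain ⟨hG0, hG1⟩ := hG
  set T : Fin M → Fin M → Set Ω := fun m₁ m₂ =>
    if m₁ = m₂ then ∅ else {ω | (1 - G) * a m₁ ω ≤ a m₂ ω ∧ a m₂ ω ≤ a m₁ ω} with hT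
  have hpair : ∀ m₁ m₂ : Fin M, μ (T m₁ m₂) ≤ ENNReal.ofReal G := by
    intro m₁ m₂
    rw [hT]
    by_cases h : m₁ = m₂
    · simp [h]
    · simp only [if_neg h]
      set S : Set (ℝ × ℝ) := {p | (1 - G) * p.1 ≤ p.2 ∧ p.2 ≤ p.1} with hS
      have hSm : MeasurableSet S := by
        apply MeasurableSet.inter
        · exact measurableSet_le (measurable_fst.const_mul _) measurable_snd
        · exact measurableSet_le measurable_snd measurable_fst
      have hmap : μ.map (fun ω => (a m₁ ω, a m₂ ω))
          = (gaussianReal 0 1).prod (gaussianReal 0 1) := by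
        have hi := hindep.indepFun h
        rw [indepFun_iff_map_prod_eq_prod_map_map (hmeas m₁).aemeasurable
          (hmeas m₂).aemeasurable] at hi
        rw [hi, hgauss, hgauss]
      have hev : {ω | (1 - G) * a m₁ ω ≤ a m₂ ω ∧ a m₂ ω ≤ a m₁ ω}
          = (fun ω => (a m₁ ω, a m₂ ω)) ⁻¹' S := rfl
      rw [hev, ← Measure.map_apply ((hmeas m₁).prodMk (hmeas m₂)) hSm, hmap,
        Measure.prod_apply hSm]
      have hsec : ∀ x : ℝ, (Prod.mk x ⁻¹' S) = Set.Icc ((1 - G) * x) x := by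
        intro x
        ext y
        simp [hS, Set.mem_Icc]
      calc ∫⁻ x, gaussianReal 0 1 (Prod.mk x ⁻¹' S) ∂(gaussianReal 0 1)
          ≤ ∫⁻ x, ENNReal.ofReal G * ENNReal.ofReal x ∂(gaussianReal 0 1) := by
            refine lintegral_mono fun x => ?_
            rw [hsec x]
            refine (aux_gauss_Icc _ _).trans ?_
            rw [show x - (1 - G) * x = G * x by ring]
            rcases le_total x 0 with h' | h'
            · rw [ENNReal.ofReal_eq_zero.mpr (by nlinarith)]
              exact zero_le
            · rw [ENNReal.ofReal_mul hG0.le]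
        _ = ENNReal.ofReal G * ∫⁻ x, ENNReal.ofReal x ∂(gaussianReal 0 1) :=
            lintegral_const_mul _ ENNReal.measurable_ofReal
        _ ≤ ENNReal.ofReal G * 1 := by gcongr; exact aux_gauss_mean
        _ = ENNReal.ofReal G := mul_one _
  have hsub : {ω | ∃ m₁ m₂, m₁ ≠ m₂ ∧ (∀ j, a j ω ≤ a m₁ ω) ∧
      (1 - G) * a m₁ ω ≤ a m₂ ω} ⊆ ⋃ m₁, ⋃ m₂, T m₁ m₂ := by
    rintro ω ⟨m₁, m₂, hne, hmax, hineq⟩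
    refine Set.mem_iUnion.mpr ⟨m₁, Set.mem_iUnion.mpr ⟨m₂, ?_⟩⟩
    rw [hT]
    simp only [if_neg hne]
    exact ⟨hineq, hmax m₂⟩
  calc μ {ω | ∃ m₁ m₂, m₁ ≠ m₂ ∧ (∀ j, a j ω ≤ a m₁ ω) ∧ (1 - G) * a m₁ ω ≤ a m₂ ω}
      ≤ μ (⋃ m₁, ⋃ m₂, T m₁ m₂) := measure_mono hsub
    _ ≤ ∑' m₁ : Fin M, μ (⋃ m₂, T m₁ m₂) := measure_iUnion_le _
    _ ≤ ∑' m₁ : Fin M, ∑' m₂ : Fin M, μ (T m₁ m₂) :=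
        ENNReal.tsum_le_tsum fun m₁ => measure_iUnion_le _
    _ ≤ ∑' m₁ : Fin M, ∑' m₂ : Fin M, ENNReal.ofReal G :=
        ENNReal.tsum_le_tsum fun m₁ => ENNReal.tsum_le_tsum fun m₂ => hpair m₁ m₂
    _ = (M : ℝ≥0∞) * ((M : ℝ≥0∞) * ENNReal.ofReal G) := by
        simp [tsum_fintype, Finset.sum_const, nsmul_eq_mul, Finset.card_univ]
    _ = ENNReal.ofReal (G * M ^ 2) := by
        rw [show (G * M ^ 2 : ℝ) = ((M ^ 2 : ℕ) : ℝ) * G by push_cast; ring,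
          ENNReal.ofReal_mul (by positivity), ENNReal.ofReal_natCast]
        push_cast
        ring
end
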